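/- Let n ≥ 2, d ∈ [0,1), and λ be a 1-periodic C^n function on ℝ with ‖∂ₓλ‖_∞ ≤ d. Then, writing (I+λ)^{-1} for the inverse diffeomorphism of x ↦ x + λ(x), there exists a constant c depending only on n, d and ‖∂ₓ^{n-1}λ‖_∞ such that ‖∂ₓⁿ(I+λ)^{-1}‖_∞ ≤ c·‖∂ₓⁿλ‖_∞. -/

import Mathlib

/-!
Differentiating `g + l ∘ g = id` gives `g' = 1 - (l' ∘ g) g'`, hence for `p ≥ 1`
`g⁽ᵖ⁺¹⁾ = -((l' ∘ g) g')⁽ᵖ⁾`. In the Leibniz expansion of the right-hand side the only term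
containing `g⁽ᵖ⁺¹⁾` is `(l' ∘ g) g⁽ᵖ⁺¹⁾`, of size at most `d |g⁽ᵖ⁺¹⁾|`; absorbing it on the left
and bounding the other terms by Faà di Bruno gives `|g⁽ᵖ⁺¹⁾| ≤ (1 - d)⁻¹ E C`, where `C` bounds
`l', …, l⁽ᵖ⁺¹⁾` and `E` depends only on bounds for `g', …, g⁽ᵖ⁾`. By induction the derivatives
of `g` of order `< n` are bounded in terms of `d` and a bound on `l', …, l⁽ⁿ⁻¹⁾`.

Periodicity supplies both bounds on `l`: every `l⁽ᵏ⁾`, `k ≥ 1`, vanishes somewhere, so by the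
mean value theorem over one period `sup |l⁽ᵏ⁾| ≤ sup |l⁽ᵏ⁺¹⁾|`. Hence `l', …, l⁽ⁿ⁻¹⁾` are bounded
by `K`, and `l', …, l⁽ⁿ⁾` by `sup |l⁽ⁿ⁾|`, which makes the last step linear in `sup |l⁽ⁿ⁾|`.
-/

open Function Set Finset
open scoped Nat

theorem Function.Periodic.periodic_deriv {f : ℝ → ℝ} {T : ℝ} (hf : Periodic f T) :
    Periodic (deriv f) T := fun x => by
  rw [← deriv_comp_add_const, funext hf]

theorem Function.Periodic.periodic_iteratedDeriv {f : ℝ → ℝ} {T : ℝ} (hf : Periodic f T) (k : ℕ) :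
    Periodic (iteratedDeriv k f) T := by
  induction k with
  | zero => simpa
  | succ k ih => simpa only [iteratedDeriv_succ] using ih.periodic_deriv

theorem Function.Periodic.bddAbove_range_abs {f : ℝ → ℝ} {T : ℝ} (hf : Periodic f T)
    (hT : T ≠ 0) (hc : Continuous f) : BddAbove (range fun x => |f x|) :=
  ((hf.comp abs).compact_of_continuous hT hc.abs).bddAbove

theorem Function.Periodic.exists_deriv_eq_zero {f : ℝ → ℝ} {T : ℝ} (hf : Periodic f T)
    (hT : T ≠ 0) (hd : Differentiable ℝ f) : ∃ x₀, deriv f x₀ = 0 := by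
  obtain ⟨_, ⟨x₀, rfl⟩, hmax⟩ :=
    (hf.compact_of_continuous hT hd.continuous).exists_isGreatest (range_nonempty f)
  exact ⟨x₀, IsLocalMax.deriv_eq_zero (Filter.Eventually.of_forall fun x => hmax ⟨x, rfl⟩)⟩

theorem Function.Periodic.abs_deriv_le_mul_iSup {f : ℝ → ℝ} {T : ℝ} (hf : Periodic f T)
    (hT : 0 < T) (hf2 : ContDiff ℝ 2 f) (x : ℝ) :
    |deriv f x| ≤ T * ⨆ y, |deriv (deriv f) y| := by
  have hd : Differentiable ℝ f := hf2.differentiable (by norm_num)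
  have hd' : Differentiable ℝ (deriv f) := (hf2.iterate_deriv' 1 1).differentiable one_ne_zero
  obtain ⟨x₀, hx₀⟩ := hf.exists_deriv_eq_zero hT.ne' hd
  obtain ⟨y, ⟨hy₀, hy₁⟩, hxy⟩ := hf.periodic_deriv.exists_mem_Ico hT x x₀
  have hbdd := hf.periodic_deriv.periodic_deriv.bddAbove_range_abs hT.ne'
    (hf2.iterate_deriv' 0 2).continuous
  have hmvt := convex_univ.norm_image_sub_le_of_norm_deriv_le (fun z _ => hd' z)
    (fun z _ => le_ciSup hbdd z) (mem_univ x₀) (mem_univ y)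
  rw [hxy, ← sub_zero (deriv f y), ← hx₀]
  calc |deriv f y - deriv f x₀| ≤ (⨆ z, |deriv (deriv f) z|) * |y - x₀| := hmvt
    _ ≤ (⨆ z, |deriv (deriv f) z|) * T := by
        gcongr
        · exact (abs_nonneg _).trans (le_ciSup hbdd x₀)
        · rw [abs_of_nonneg (by linarith)]; linarith
    _ = T * ⨆ z, |deriv (deriv f) z| := mul_comm _ _

theorem Function.Periodic.abs_iteratedDeriv_le_iSup {f : ℝ → ℝ} {n : ℕ} (hf : Periodic f 1)
    (hcd : ContDiff ℝ n f) {k m : ℕ} (hk : 1 ≤ k) (hkm : k ≤ m) (hmn : m ≤ n) (x : ℝ) :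
    |iteratedDeriv k f x| ≤ ⨆ y, |iteratedDeriv m f y| := by
  induction m, hkm using Nat.le_induction with
  | base =>
    exact le_ciSup ((hf.periodic_iteratedDeriv k).bddAbove_range_abs one_ne_zero
      (hcd.continuous_iteratedDeriv k (mod_cast hmn))) x
  | succ m hkm ih =>
    refine (ih (by omega)).trans (ciSup_le fun y => ?_)
    obtain ⟨j, rfl⟩ : ∃ j, m = j + 1 := ⟨m - 1, by omega⟩
    have hj : ContDiff ℝ 2 (iteratedDeriv j f) := by
      rw [iteratedDeriv_eq_iterate]
      exact ContDiff.iterate_deriv' 2 j (hcd.of_le (mod_cast (by omega : 2 + j ≤ n)))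
    simpa only [iteratedDeriv_succ, one_mul] using
      (hf.periodic_iteratedDeriv j).abs_deriv_le_mul_iSup one_pos hj y

theorem norm_iteratedDeriv_comp_le {𝕜 F : Type*} [NontriviallyNormedField 𝕜]
    [NormedAddCommGroup F] [NormedSpace 𝕜 F] {f : 𝕜 → F} {g : 𝕜 → 𝕜} {N : WithTop ℕ∞}
    {n : ℕ} (hf : ContDiff 𝕜 N f) (hg : ContDiff 𝕜 N g) (hn : n ≤ N) (x : 𝕜) {C D : ℝ}
    (hC : ∀ i ≤ n, ‖iteratedDeriv i f (g x)‖ ≤ C)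
    (hD : ∀ i, 1 ≤ i → i ≤ n → ‖iteratedDeriv i g x‖ ≤ D ^ i) :
    ‖iteratedDeriv n (f ∘ g) x‖ ≤ n ! * C * D ^ n := by
  simp only [← norm_iteratedFDeriv_eq_norm_iteratedDeriv] at hC hD ⊢
  exact norm_iteratedFDeriv_comp_le hf hg hn x hC hD

section InverseOfIdAdd

variable {l g : ℝ → ℝ} {d : ℝ}

theorem deriv_eq_one_sub_of_add_comp_eq_id (hl : Differentiable ℝ l) (hg : Differentiable ℝ g)
    (hid : ∀ x, g x + l (g x) = x) : deriv g = fun x => 1 - deriv l (g x) * deriv g x := by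
  funext x
  have h := ((hg x).hasDerivAt.add ((hl (g x)).hasDerivAt.comp x (hg x).hasDerivAt)).unique
    ((funext hid : (fun y => g y + l (g y)) = id) ▸ hasDerivAt_id x)
  linarith

theorem abs_le_inv_one_sub_of_abs_le_add {a r : ℝ} (hd : d < 1) (h : |a| ≤ r + d * |a|) :
    |a| ≤ (1 - d)⁻¹ * r := by
  rw [← div_eq_inv_mul, le_div_iff₀ (by linarith)]
  linarith

theorem abs_deriv_le_of_add_comp_eq_id (hd : d < 1) (hl : Differentiable ℝ l)
    (hg : Differentiable ℝ g) (hid : ∀ x, g x + l (g x) = x) (hld : ∀ x, |deriv l x| ≤ d)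
    (x : ℝ) : |deriv g x| ≤ (1 - d)⁻¹ := by
  have h : |deriv g x| ≤ 1 + d * |deriv g x| := by
    calc |deriv g x| = |1 - deriv l (g x) * deriv g x| := by
          conv_lhs => rw [deriv_eq_one_sub_of_add_comp_eq_id hl hg hid]
      _ ≤ 1 + |deriv l (g x)| * |deriv g x| := by
          simpa only [abs_one, abs_mul] using abs_sub (1 : ℝ) (deriv l (g x) * deriv g x)
      _ ≤ 1 + d * |deriv g x| := by gcongr; exact hld _
  simpa using abs_le_inv_one_sub_of_abs_le_add hd h

theorem iteratedDeriv_succ_eq_neg_of_add_comp_eq_id {p : ℕ} (hp : 1 ≤ p)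
    (hl : ContDiff ℝ (p + 1 : ℕ) l) (hg : ContDiff ℝ (p + 1 : ℕ) g)
    (hid : ∀ x, g x + l (g x) = x) (x : ℝ) :
    iteratedDeriv (p + 1) g x = -(∑ i ∈ range p, (p.choose (i + 1) : ℝ) *
      iteratedDeriv (i + 1) (fun y => deriv l (g y)) x * iteratedDeriv (p - i) g x +
      deriv l (g x) * iteratedDeriv (p + 1) g x) := by
  have hl' : ContDiff ℝ p (deriv l) := by simpa using hl.iterate_deriv' p 1
  have hg' : ContDiff ℝ p (deriv g) := by simpa using hg.iterate_deriv' p 1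
  have hgp : ContDiff ℝ p g := hg.of_le (mod_cast p.le_succ)
  conv_lhs => rw [iteratedDeriv_succ', deriv_eq_one_sub_of_add_comp_eq_id
    (hl.differentiable (by simp)) (hg.differentiable (by simp)) hid]
  rw [iteratedDeriv_const_sub hp, iteratedDeriv_neg, iteratedDeriv_fun_mul
    (f := fun y => deriv l (g y)) (hl'.comp hgp).contDiffAt hg'.contDiffAt, sum_range_succ']
  congr 2
  · refine sum_congr rfl fun i hi => ?_
    rw [← iteratedDeriv_succ', show p - (i + 1) + 1 = p - i by have := mem_range.mp hi; omega]
  · simp [← iteratedDeriv_succ']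

noncomputable def inverseDerivCoeff (p : ℕ) (D : ℝ) : ℝ :=
  ∑ i ∈ range p, (p.choose (i + 1) * (i + 1)! : ℝ) * D ^ (i + 2)

theorem abs_iteratedDeriv_succ_le_of_add_comp_eq_id {p : ℕ} (hp : 1 ≤ p) {C D : ℝ}
    (hd : d < 1) (hD : 1 ≤ D) (hl : ContDiff ℝ (p + 1 : ℕ) l) (hg : ContDiff ℝ (p + 1 : ℕ) g)
    (hid : ∀ x, g x + l (g x) = x) (hld : ∀ x, |deriv l x| ≤ d)
    (hlC : ∀ k, 1 ≤ k → k ≤ p + 1 → ∀ x, |iteratedDeriv k l x| ≤ C)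
    (hgD : ∀ k, 1 ≤ k → k ≤ p → ∀ x, |iteratedDeriv k g x| ≤ D) (x : ℝ) :
    |iteratedDeriv (p + 1) g x| ≤ (1 - d)⁻¹ * (inverseDerivCoeff p D * C) := by
  have hcomp (i : ℕ) (hi : i + 1 ≤ p) :
      |iteratedDeriv (i + 1) (fun y => deriv l (g y)) x| ≤ (i + 1)! * C * D ^ (i + 1) := by
    have hl' : ContDiff ℝ p (deriv l) := by simpa using hl.iterate_deriv' p 1
    refine norm_iteratedDeriv_comp_le hl' (hg.of_le (mod_cast p.le_succ)) (mod_cast hi) x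
      (fun j hj => ?_)
      (fun j hj₁ hj₂ => (hgD j hj₁ (by omega) x).trans (le_self_pow₀ hD (by omega)))
    simpa only [← iteratedDeriv_succ', Real.norm_eq_abs] using
      hlC (j + 1) (by omega) (by omega) (g x)
  have hterm (i : ℕ) (hi : i ∈ range p) :
      |(p.choose (i + 1) : ℝ) * iteratedDeriv (i + 1) (fun y => deriv l (g y)) x *
        iteratedDeriv (p - i) g x| ≤ (p.choose (i + 1) * (i + 1)! : ℝ) * D ^ (i + 2) * C := by
    have hi : i + 1 ≤ p := mem_range.mp hi
    rw [abs_mul, abs_mul, Nat.abs_cast]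
    calc (p.choose (i + 1) : ℝ) * |iteratedDeriv (i + 1) (fun y => deriv l (g y)) x| *
          |iteratedDeriv (p - i) g x|
        ≤ p.choose (i + 1) * ((i + 1)! * C * D ^ (i + 1)) * D :=
          mul_le_mul (mul_le_mul_of_nonneg_left (hcomp i hi) (Nat.cast_nonneg _))
            (hgD _ (by omega) (by omega) x) (abs_nonneg _)
            (mul_nonneg (Nat.cast_nonneg _) ((abs_nonneg _).trans (hcomp i hi)))
      _ = (p.choose (i + 1) * (i + 1)! : ℝ) * D ^ (i + 2) * C := by ring
  refine abs_le_inv_one_sub_of_abs_le_add hd ?_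
  calc |iteratedDeriv (p + 1) g x|
      ≤ |∑ i ∈ range p, (p.choose (i + 1) : ℝ) *
          iteratedDeriv (i + 1) (fun y => deriv l (g y)) x * iteratedDeriv (p - i) g x| +
        |deriv l (g x) * iteratedDeriv (p + 1) g x| := by
        nth_rw 1 [iteratedDeriv_succ_eq_neg_of_add_comp_eq_id hp hl hg hid]
        rw [abs_neg]
        exact abs_add_le _ _
    _ ≤ inverseDerivCoeff p D * C + d * |iteratedDeriv (p + 1) g x| := by
        rw [inverseDerivCoeff, sum_mul, abs_mul]
        gcongr
        · exact (abs_sum_le_sum_abs _ _).trans (sum_le_sum hterm)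
        · exact hld _

noncomputable def inverseDerivBound (d M : ℝ) : ℕ → ℝ
  | 0 => max 1 (1 - d)⁻¹
  | p + 1 => max (inverseDerivBound d M p)
      ((1 - d)⁻¹ * (inverseDerivCoeff (p + 1) (inverseDerivBound d M p) * M))

theorem one_le_inverseDerivBound (d M : ℝ) : ∀ p, 1 ≤ inverseDerivBound d M p
  | 0 => le_max_left _ _
  | p + 1 => (one_le_inverseDerivBound d M p).trans (le_max_left _ _)

theorem abs_iteratedDeriv_le_inverseDerivBound {M : ℝ} (hd : d < 1)
    (hid : ∀ x, g x + l (g x) = x) (hld : ∀ x, |deriv l x| ≤ d) :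
    ∀ p : ℕ, ContDiff ℝ (p + 1 : ℕ) l → ContDiff ℝ (p + 1 : ℕ) g →
      (∀ k, 1 ≤ k → k ≤ p + 1 → ∀ x, |iteratedDeriv k l x| ≤ M) →
      ∀ k, 1 ≤ k → k ≤ p + 1 → ∀ x, |iteratedDeriv k g x| ≤ inverseDerivBound d M p
  | 0, hl, hg, _, k, hk₁, hk₂, x => by
    obtain rfl : k = 1 := by omega
    rw [iteratedDeriv_one]
    exact (abs_deriv_le_of_add_comp_eq_id hd (hl.differentiable (by simp))
      (hg.differentiable (by simp)) hid hld x).trans (le_max_right _ _)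
  | p + 1, hl, hg, hlM, k, hk₁, hk₂, x => by
    have ih := abs_iteratedDeriv_le_inverseDerivBound hd hid hld p
      (hl.of_le (mod_cast (p + 1).le_succ)) (hg.of_le (mod_cast (p + 1).le_succ))
      (fun j hj₁ hj₂ => hlM j hj₁ (by omega))
    rcases Nat.lt_or_eq_of_le hk₂ with hk | rfl
    · exact (ih k hk₁ (by omega) x).trans (le_max_left _ _)
    · exact (abs_iteratedDeriv_succ_le_of_add_comp_eq_id (by omega) hd
        (one_le_inverseDerivBound d M p) hl hg hid hld hlM ih x).trans (le_max_right _ _)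

end InverseOfIdAdd

theorem deriv_inverse_id_add_bound_general (n : ℕ) (hn : 2 ≤ n) (d : ℝ)
    (hd : d < 1) (K : ℝ) :
    ∃ c : ℝ, ∀ l : ℝ → ℝ, ContDiff ℝ n l → Function.Periodic l 1 →
      (∀ x, |deriv l x| ≤ d) →
      (⨆ x : ℝ, |iteratedDeriv (n - 1) l x|) ≤ K →
      ∀ g : ℝ → ℝ, ContDiff ℝ n g →
        Function.LeftInverse g (fun x => x + l x) →
        Function.RightInverse g (fun x => x + l x) →
        ∀ x : ℝ, |iteratedDeriv n g x| ≤ c * ⨆ y : ℝ, |iteratedDeriv n l y| := by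
  obtain ⟨m, rfl⟩ := Nat.exists_eq_add_of_le' hn
  refine ⟨(1 - d)⁻¹ * inverseDerivCoeff (m + 1) (inverseDerivBound d K m), ?_⟩
  intro l hl hper hld hK g hg _ hinv x
  have hid : ∀ y, g y + l (g y) = y := hinv
  have hlK (k : ℕ) (hk₁ : 1 ≤ k) (hk₂ : k ≤ m + 1) (y : ℝ) : |iteratedDeriv k l y| ≤ K :=
    (hper.abs_iteratedDeriv_le_iSup hl hk₁ hk₂ (by omega) y).trans hK
  have hgB := abs_iteratedDeriv_le_inverseDerivBound hd hid hld m
    (hl.of_le (mod_cast (m + 1).le_succ)) (hg.of_le (mod_cast (m + 1).le_succ)) hlK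
  rw [mul_assoc]
  exact abs_iteratedDeriv_succ_le_of_add_comp_eq_id (by omega) hd
    (one_le_inverseDerivBound d K m) hl hg hid hld
    (fun k hk₁ hk₂ => hper.abs_iteratedDeriv_le_iSup hl hk₁ hk₂ le_rfl) hgB x

/-- Bound on the n-th derivative of the inverse of `I + λ`, for a 1-periodic C^n
function `λ` with `‖∂ₓλ‖_∞ ≤ d < 1`: there is a constant `c` depending only on `n`,
`d` and `‖∂ₓ^{n-1}λ‖_∞` (bounded by `K`) with `‖∂ₓⁿ(I+λ)^{-1}‖_∞ ≤ c‖∂ₓⁿλ‖_∞`. -/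
theorem deriv_inverse_id_add_bound (n : ℕ) (hn : 2 ≤ n) (d : ℝ)
    (hd0 : 0 ≤ d) (hd : d < 1) (K : ℝ) :
    ∃ c : ℝ, ∀ l : ℝ → ℝ, ContDiff ℝ n l → Function.Periodic l 1 →
      (∀ x, |deriv l x| ≤ d) →
      (⨆ x : ℝ, |iteratedDeriv (n - 1) l x|) ≤ K →
      ∀ g : ℝ → ℝ, ContDiff ℝ n g →
        Function.LeftInverse g (fun x => x + l x) →
        Function.RightInverse g (fun x => x + l x) →
        ∀ x : ℝ, |iteratedDeriv n g x| ≤ c * ⨆ y : ℝ, |iteratedDeriv n l y| :=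
  deriv_inverse_id_add_bound_general n hn d hd K
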